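/- arXiv:2105.07356 — 6 statements merged into one kernel-verified Lean document; each statement's English description precedes it below -/
import Mathlib

section
/- Let K = RatFunc ℚ with A = RatFunc.X. Let V be a K-vector space, s : V →ₗ[K] V a K-linear endomorphism, and W ⊆ V a subspace with s(W) ⊆ W. Let m : ℕ and define Δ₋ = A • id - A⁻¹ • s and Δ₊ₘ = A^(4m+1) • s - A⁻¹ • id. If v ∈ V and p, q : ℕ satisfy Δ₊ₘ^p v ∈ W and Δ₋^q v ∈ W, then v ∈ W. -/
/-!
Both Δ-maps are polynomials in `s`, so they commute and preserve `W`, and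
`A • Δ₊ₘ + A ^ (4m+3) • Δ₋ = (A ^ (4m+4) - 1) • id` with `A ^ (4m+4) ≠ 1`. Hence if `Δ₊ₘ v` and
`Δ₋ v` lie in `W`, so does `v`; an induction on `p` and `q` peels off the powers, using that
`Δ₊ₘ ^ p (Δ₋ v) = Δ₋ (Δ₊ₘ ^ p v)` and symmetrically.
-/

/-- The variable `A` of the field of rational functions `ℚ(A)`. -/
noncomputable def A : RatFunc ℚ := RatFunc.X

namespace Submodule

variable {R M : Type*} [CommRing R] [AddCommGroup M] [Module R M]
  {f g : Module.End R M} {W : Submodule R M} {a b c : R}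

theorem mem_of_apply_mem_of_pow_apply_mem (hc : IsUnit c) (hfg : a • f + b • g = c • 1)
    (hcomm : Commute f g) (hg : ∀ w ∈ W, g w ∈ W) {v : M} (hfv : f v ∈ W) {q : ℕ}
    (hgv : (g ^ q) v ∈ W) : v ∈ W := by
  induction q generalizing v with
  | zero => simpa using hgv
  | succ q ih =>
    have hgv' : g v ∈ W := by
      refine ih ?_ ?_
      · rw [← Module.End.mul_apply, hcomm.eq, Module.End.mul_apply]
        exact hg _ hfv
      · rwa [← Module.End.mul_apply, ← pow_succ]
    have hcv : c • v = a • f v + b • g v := by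
      simpa using (LinearMap.congr_fun hfg v).symm
    rw [← W.smul_mem_iff_of_isUnit hc, hcv]
    exact W.add_mem (W.smul_mem a hfv) (W.smul_mem b hgv')

theorem mem_of_pow_apply_mem_of_pow_apply_mem (hc : IsUnit c) (hfg : a • f + b • g = c • 1)
    (hcomm : Commute f g) (hf : ∀ w ∈ W, f w ∈ W) (hg : ∀ w ∈ W, g w ∈ W) {v : M} {p q : ℕ}
    (hfv : (f ^ p) v ∈ W) (hgv : (g ^ q) v ∈ W) : v ∈ W := by
  induction p generalizing v with
  | zero => simpa using hfv
  | succ p ih =>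
    refine W.mem_of_apply_mem_of_pow_apply_mem hc hfg hcomm hg (ih ?_ ?_) hgv
    · rwa [← Module.End.mul_apply, ← pow_succ]
    · rw [← Module.End.mul_apply, ← (hcomm.pow_right q).eq, Module.End.mul_apply]
      exact hf _ hgv

end Submodule

section Delta

variable {K V : Type*} [Field K] [AddCommGroup V] [Module K V]

/-- The paper's `Δ₋`, with an arbitrary scalar `a` in place of `A`. -/
def deltaMinus (a : K) (s : Module.End K V) : Module.End K V :=
  a • 1 - a⁻¹ • s

/-- The paper's `Δ₊ₘ`, with an arbitrary scalar `a` in place of `A`. -/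
def deltaPlus (a : K) (m : ℕ) (s : Module.End K V) : Module.End K V :=
  a ^ (4 * m + 1) • s - a⁻¹ • 1

theorem commute_deltaPlus_deltaMinus (a : K) (m : ℕ) (s : Module.End K V) :
    Commute (deltaPlus a m s) (deltaMinus a s) := by
  unfold deltaPlus deltaMinus
  refine .sub_left (.sub_right ?_ ?_) (.sub_right ?_ ?_)
  all_goals refine .smul_left (.smul_right ?_ _) _
  exacts [.one_right s, .refl s, .one_left 1, .one_left s]

theorem smul_deltaPlus_add_smul_deltaMinus {a : K} (ha : a ≠ 0) (m : ℕ) (s : Module.End K V) :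
    a • deltaPlus a m s + a ^ (4 * m + 3) • deltaMinus a s = (a ^ (4 * m + 4) - 1) • 1 := by
  unfold deltaPlus deltaMinus
  match_scalars <;> field_simp <;> ring

variable {s : Module.End K V} {W : Submodule K V}

theorem deltaMinus_apply_mem (hW : ∀ w ∈ W, s w ∈ W) (a : K) {w : V} (hw : w ∈ W) :
    deltaMinus a s w ∈ W :=
  W.sub_mem (W.smul_mem _ hw) (W.smul_mem _ (hW w hw))

theorem deltaPlus_apply_mem (hW : ∀ w ∈ W, s w ∈ W) (a : K) (m : ℕ) {w : V} (hw : w ∈ W) :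
    deltaPlus a m s w ∈ W :=
  W.sub_mem (W.smul_mem _ (hW w hw)) (W.smul_mem _ hw)

end Delta

theorem RatFunc.X_pow_ne_one {K : Type*} [Field K] {n : ℕ} (hn : n ≠ 0) :
    (RatFunc.X : RatFunc K) ^ n ≠ 1 := by
  rw [← RatFunc.algebraMap_X, ← map_pow, ← map_one (algebraMap (Polynomial K) (RatFunc K)),
    (RatFunc.algebraMap_injective K).ne_iff]
  exact fun h => hn (by simpa using congrArg Polynomial.natDegree h)

/-- If `Δ₊ₘ^p v` and `Δ₋^q v` lie in an `s`-invariant subspace `W`, then `v ∈ W`. -/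
theorem stmt_5 {V : Type*} [AddCommGroup V] [Module (RatFunc ℚ) V]
    (s : Module.End (RatFunc ℚ) V) (W : Submodule (RatFunc ℚ) V)
    (hW : ∀ w ∈ W, s w ∈ W) (m : ℕ) (v : V) (p q : ℕ)
    (hp : ((A ^ (4 * m + 1) • s - A⁻¹ • (1 : Module.End (RatFunc ℚ) V)) ^ p) v ∈ W)
    (hq : ((A • (1 : Module.End (RatFunc ℚ) V) - A⁻¹ • s) ^ q) v ∈ W) :
    v ∈ W := by
  have hunit : IsUnit (A ^ (4 * m + 4) - 1) :=
    (sub_ne_zero.mpr (RatFunc.X_pow_ne_one (by omega))).isUnit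
  exact W.mem_of_pow_apply_mem_of_pow_apply_mem hunit
    (smul_deltaPlus_add_smul_deltaMinus RatFunc.X_ne_zero m s)
    (commute_deltaPlus_deltaMinus A m s) (fun _ => deltaPlus_apply_mem hW A m)
    (fun _ => deltaMinus_apply_mem hW A) hp hq
end

section
/- Let K = RatFunc ℚ with A = RatFunc.X. Let V be a K-vector space, s : V →ₗ[K] V a K-linear endomorphism, and W ⊆ V a subspace with s(W) ⊆ W. Let m : ℕ and define Δ₋ = A • id - A⁻¹ • s, Δ₊ₘ = A^(4m+1) • s - A⁻¹ • id, and Δ₋₁ = A • id - A⁻³ • s. If v ∈ V and p, q : ℕ satisfy (Δ₋₁ ∘ Δ₋^p) v ∈ W and Δ₊ₘ^q v ∈ W, then v ∈ W. -/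
/-!
All three operators are values at `s` of linear polynomials over `ℚ(A)`, with roots `A⁴`, `A²`
and `A^(-4m-2)`. These are pairwise distinct because `A` is transcendental over `ℚ`, so the two
products of linear polynomials are coprime, and evaluating a Bézout identity at `s` writes `v`
as a sum of images of `(Δ₋₁ ∘ Δ₋^p) v` and `Δ₊ₘ^q v` under polynomials in `s`.
-/

open Polynomial

theorem Polynomial.mem_of_aeval_apply_mem_of_isCoprime {R M : Type*} [CommSemiring R]
    [AddCommMonoid M] [Module R M] {s : Module.End R M} {W : Submodule R M}
    (hW : W ≤ W.comap s) {P Q : R[X]} (hPQ : IsCoprime P Q) {v : M}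
    (hP : aeval s P v ∈ W) (hQ : aeval s Q v ∈ W) : v ∈ W := by
  obtain ⟨a, b, hab⟩ := hPQ
  have hv : v = aeval s a (aeval s P v) + aeval s b (aeval s Q v) := by
    simpa using congr($(congrArg (aeval s) hab) v).symm
  rw [hv]
  exact W.add_mem (aeval_apply_smul_mem_of_le_comap hP a s hW)
    (aeval_apply_smul_mem_of_le_comap hQ b s hW)

theorem Polynomial.isCoprime_C_mul_X_add_C {K : Type*} [Field K] {a b c d : K}
    (h : a * d ≠ b * c) : IsCoprime (C a * X + C b) (C c * X + C d) := by
  have hdet : a * d - b * c ≠ 0 := sub_ne_zero.mpr h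
  -- `a (cX + d) - c (aX + b)` is the constant `ad - bc`
  refine ⟨C (-c / (a * d - b * c)), C (a / (a * d - b * c)), ?_⟩
  calc C (-c / (a * d - b * c)) * (C a * X + C b) + C (a / (a * d - b * c)) * (C c * X + C d)
      = C ((a * d - b * c)⁻¹ * (a * d - b * c)) := by
        simp only [div_eq_mul_inv, C_mul, C_neg, C_sub]; ring
    _ = 1 := by rw [inv_mul_cancel₀ hdet, C_1]

theorem Polynomial.aeval_C_mul_X_add_C {R M : Type*} [CommSemiring R] [AddCommMonoid M]
    [Module R M] (s : Module.End R M) (a b : R) :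
    aeval s (C a * X + C b) = a • s + b • 1 := by
  simp [Algebra.algebraMap_eq_smul_one]

theorem A_pow_ne_inv_pow {i j : ℕ} (h : i + j ≠ 0) : A ^ i ≠ A⁻¹ ^ j := by
  intro hij
  have hA : A ^ (i + j) = 1 := by
    rw [pow_add, hij, ← mul_pow, inv_mul_cancel₀ RatFunc.X_ne_zero, one_pow]
  refine RatFunc.transcendental_X (K := ℚ)
    ⟨X ^ (i + j) - 1, X_pow_sub_C_ne_zero (Nat.pos_of_ne_zero h) 1, ?_⟩
  simpa [A, sub_eq_zero] using hA

/-- If `(Δ₋₁ ∘ Δ₋^p) v` and `Δ₊ₘ^q v` lie in an `s`-invariant subspace `W`, then `v ∈ W`. -/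
theorem stmt_6 {V : Type*} [AddCommGroup V] [Module (RatFunc ℚ) V]
    (s : Module.End (RatFunc ℚ) V) (W : Submodule (RatFunc ℚ) V)
    (hW : ∀ w ∈ W, s w ∈ W) (m : ℕ) (v : V) (p q : ℕ)
    (hp : (((A • (1 : Module.End (RatFunc ℚ) V) - A⁻¹ ^ 3 • s)
        * (A • (1 : Module.End (RatFunc ℚ) V) - A⁻¹ • s) ^ p)) v ∈ W)
    (hq : ((A ^ (4 * m + 1) • s - A⁻¹ • (1 : Module.End (RatFunc ℚ) V)) ^ q) v ∈ W) :
    v ∈ W := by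
  have hdet₁ : -A⁻¹ ^ 3 * -A⁻¹ ≠ A * A ^ (4 * m + 1) := by
    convert (A_pow_ne_inv_pow (i := 4 * m + 2) (j := 4) (by omega)).symm using 1 <;> ring
  have hdet₂ : -A⁻¹ * -A⁻¹ ≠ A * A ^ (4 * m + 1) := by
    convert (A_pow_ne_inv_pow (i := 4 * m + 2) (j := 2) (by omega)).symm using 1 <;> ring
  have hcop : IsCoprime ((C (-A⁻¹ ^ 3) * X + C A) * (C (-A⁻¹) * X + C A) ^ p)
      ((C (A ^ (4 * m + 1)) * X + C (-A⁻¹)) ^ q) :=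
    ((isCoprime_C_mul_X_add_C hdet₁).mul_left (isCoprime_C_mul_X_add_C hdet₂).pow_left).pow_right
  refine mem_of_aeval_apply_mem_of_isCoprime hW hcop ?_ ?_
  · simpa only [map_mul, map_pow, aeval_C_mul_X_add_C, neg_smul, neg_add_eq_sub] using hp
  · rwa [map_pow, aeval_C_mul_X_add_C, neg_smul, ← sub_eq_add_neg]
end

section
/- Let K = RatFunc ℚ with A = RatFunc.X. Let V be a K-vector space, s : V →ₗ[K] V a K-linear endomorphism, W ⊆ V a subspace, and m : ℕ. Define Δ₊ = A • s - A⁻¹ • id and Δ₊ₘ = A^(4m+1) • s - A⁻¹ • id. Suppose L, R : ℤ → V are families with s(L a) = L (a+2) and s(R a) = R (a+2) for all a ∈ ℤ, and L a - A^(2 m a) • R a ∈ W for all a ∈ ℤ (where A^(2ma) denotes the integer power zpow of the unit A). Then for every k : ℕ and every a ∈ ℤ, Δ₊^k (L a) - A^(2 m a) • Δ₊ₘ^k (R a) ∈ W. -/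
lemma A_ne_zero' : (A : RatFunc ℚ) ≠ 0 := RatFunc.X_ne_zero

lemma scalar_key (m : ℕ) (a : ℤ) :
    (A : RatFunc ℚ) ^ (2 * (m : ℤ) * a) * A ^ (4 * m + 1) =
      A * A ^ (2 * (m : ℤ) * (a + 2)) := by
  rw [show ((A : RatFunc ℚ)) ^ (4 * m + 1) = A ^ ((4 * m + 1 : ℕ) : ℤ) from
    (zpow_natCast A _).symm, ← zpow_add₀ A_ne_zero', ← zpow_one_add₀ A_ne_zero']
  congr 1
  push_cast
  ring

lemma aux_key {V : Type*} [AddCommGroup V] [Module (RatFunc ℚ) V]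
    (s : Module.End (RatFunc ℚ) V) (W : Submodule (RatFunc ℚ) V) (m : ℕ) :
    ∀ (k : ℕ) (L R : ℤ → V),
      (∀ a : ℤ, s (L a) = L (a + 2)) →
      (∀ a : ℤ, s (R a) = R (a + 2)) →
      (∀ a : ℤ, L a - A ^ (2 * (m : ℤ) * a) • R a ∈ W) →
      ∀ a : ℤ,
      ((A • s - A⁻¹ • (1 : Module.End (RatFunc ℚ) V)) ^ k) (L a)
        - A ^ (2 * (m : ℤ) * a) •
          ((A ^ (4 * m + 1) • s - A⁻¹ • (1 : Module.End (RatFunc ℚ) V)) ^ k) (R a) ∈ W := by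
  intro k
  induction k with
  | zero =>
    intro L R hL hR hLR a
    simpa using hLR a
  | succ k ih =>
    intro L R hL hR hLR a
    have hL' : ∀ a : ℤ, s (A • L (a + 2) - A⁻¹ • L a) =
        A • L (a + 2 + 2) - A⁻¹ • L (a + 2) := by
      intro a
      simp [map_sub, map_smul, hL]
    have hR' : ∀ a : ℤ, s (A ^ (4 * m + 1) • R (a + 2) - A⁻¹ • R a) =
        A ^ (4 * m + 1) • R (a + 2 + 2) - A⁻¹ • R (a + 2) := by
      intro a
      simp [map_sub, map_smul, hR]
    have hLR' : ∀ a : ℤ,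
        (A • L (a + 2) - A⁻¹ • L a)
          - A ^ (2 * (m : ℤ) * a) • (A ^ (4 * m + 1) • R (a + 2) - A⁻¹ • R a) ∈ W := by
      intro a
      have key : (A • L (a + 2) - A⁻¹ • L a)
          - A ^ (2 * (m : ℤ) * a) • (A ^ (4 * m + 1) • R (a + 2) - A⁻¹ • R a)
          = A • (L (a + 2) - A ^ (2 * (m : ℤ) * (a + 2)) • R (a + 2))
            - A⁻¹ • (L a - A ^ (2 * (m : ℤ) * a) • R a) := by
        rw [smul_sub, smul_sub, smul_sub, smul_smul, smul_smul, smul_smul, smul_smul,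
          scalar_key, mul_comm (A ^ (2 * (m : ℤ) * a)) A⁻¹]
        abel
      rw [key]
      exact W.sub_mem (W.smul_mem _ (hLR (a + 2))) (W.smul_mem _ (hLR a))
    have hmain := ih (fun a => A • L (a + 2) - A⁻¹ • L a)
      (fun a => A ^ (4 * m + 1) • R (a + 2) - A⁻¹ • R a) hL' hR' hLR' a
    have e1 : ((A • s - A⁻¹ • (1 : Module.End (RatFunc ℚ) V)) ^ (k + 1)) (L a)
        = ((A • s - A⁻¹ • (1 : Module.End (RatFunc ℚ) V)) ^ k)
            (A • L (a + 2) - A⁻¹ • L a) := by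
      rw [pow_succ, Module.End.mul_apply]
      congr 1
      simp [hL]
    have e2 : ((A ^ (4 * m + 1) • s - A⁻¹ • (1 : Module.End (RatFunc ℚ) V)) ^ (k + 1)) (R a)
        = ((A ^ (4 * m + 1) • s - A⁻¹ • (1 : Module.End (RatFunc ℚ) V)) ^ k)
            (A ^ (4 * m + 1) • R (a + 2) - A⁻¹ • R a) := by
      rw [pow_succ, Module.End.mul_apply]
      congr 1
      simp [hR]
    rw [e1, e2]
    exact hmain

/-- If `L a ≅ A^(2ma) • R a` modulo `W` and `s` shifts the index `a` by `2` on both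
families, then `Δ₊^k (L a) ≅ A^(2ma) • Δ₊ₘ^k (R a)` modulo `W` for all `k`. -/
theorem stmt_7 {V : Type*} [AddCommGroup V] [Module (RatFunc ℚ) V]
    (s : Module.End (RatFunc ℚ) V) (W : Submodule (RatFunc ℚ) V) (m : ℕ)
    (L R : ℤ → V)
    (hL : ∀ a : ℤ, s (L a) = L (a + 2))
    (hR : ∀ a : ℤ, s (R a) = R (a + 2))
    (hLR : ∀ a : ℤ, L a - A ^ (2 * (m : ℤ) * a) • R a ∈ W) :
    ∀ (k : ℕ) (a : ℤ),
      ((A • s - A⁻¹ • (1 : Module.End (RatFunc ℚ) V)) ^ k) (L a)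
        - A ^ (2 * (m : ℤ) * a) •
          ((A ^ (4 * m + 1) • s - A⁻¹ • (1 : Module.End (RatFunc ℚ) V)) ^ k) (R a) ∈ W := by
  intro k a
  exact aux_key s W m k L R hL hR hLR a
end

section
/- Let K = RatFunc ℚ with A = RatFunc.X. Let V be a K-vector space, s : V →ₗ[K] V a K-linear endomorphism, and Δ₊ = A • s - A⁻¹ • id. Suppose D : ℤ → ℤ → List Bool → V is a family satisfying, for all k, a ∈ ℤ and all lists ℓ of Booleans: (a) s (D k a ℓ) = D k (a+2) ℓ, and (b) A • D k (a+2) ℓ - A⁻¹ • D k a ℓ = A • D (k-1) a (false :: ℓ) - A⁻¹ • D (k-1) (a+1) (true :: ℓ). Then for every n ≥ 1 and all k₀, a ∈ ℤ: Δ₊^n (D k₀ a []) = Σ_{e : Fin n → Bool} (-1)^(o(e)) A^(z(e) - o(e)) • D (k₀ - n) (a + o(e)) (List.ofFn e), where o(e) is the number of indices i with e i = true, z(e) = n - o(e), and A^(z(e)-o(e)) is an integer power of the unit A. -/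
/-- The number of `true` entries of `e : Fin n → Bool`. -/
def ones {n : ℕ} (e : Fin n → Bool) : ℕ := (Finset.univ.filter fun i => e i = true).card

lemma ones_cons {n : ℕ} (b : Bool) (e : Fin n → Bool) :
    ones (Fin.cons b e) = (if b then 1 else 0) + ones e := by
  simp only [ones, Finset.card_filter, Fin.sum_univ_succ, Fin.cons_zero, Fin.cons_succ]


lemma ofFn_cons {n : ℕ} (b : Bool) (e : Fin n → Bool) :
    List.ofFn (Fin.cons b e) = b :: List.ofFn e := by
  rw [List.ofFn_succ]
  simp

lemma aux_key_s10 {V : Type*} [AddCommGroup V] [Module (RatFunc ℚ) V]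
    (s : Module.End (RatFunc ℚ) V) (D : ℤ → ℤ → List Bool → V)
    (ha : ∀ (k a : ℤ) (ℓ : List Bool), s (D k a ℓ) = D k (a + 2) ℓ)
    (hb : ∀ (k a : ℤ) (ℓ : List Bool),
      A • D k (a + 2) ℓ - A⁻¹ • D k a ℓ
        = A • D (k - 1) a (false :: ℓ) - A⁻¹ • D (k - 1) (a + 1) (true :: ℓ)) :
    ∀ n : ℕ, ∀ k a : ℤ, ∀ ℓ : List Bool,
      ((A • s - A⁻¹ • (1 : Module.End (RatFunc ℚ) V)) ^ n) (D k a ℓ)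
        = ∑ e : Fin n → Bool,
            ((-1 : RatFunc ℚ) ^ ones e * A ^ ((n : ℤ) - 2 * (ones e : ℤ)))
              • D (k - n) (a + ones e) (List.ofFn e ++ ℓ) := by
  have hA : A ≠ 0 := RatFunc.X_ne_zero
  have hΔ : ∀ (k a : ℤ) (ℓ : List Bool),
      ((A • s - A⁻¹ • (1 : Module.End (RatFunc ℚ) V))) (D k a ℓ)
        = A • D (k - 1) a (false :: ℓ) - A⁻¹ • D (k - 1) (a + 1) (true :: ℓ) := by
    intro k a ℓ
    rw [LinearMap.sub_apply, LinearMap.smul_apply, LinearMap.smul_apply, Module.End.one_apply,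
      ha, hb]
  intro n
  induction n with
  | zero =>
      intro k a ℓ
      simp [ones]
  | succ n ih =>
      intro k a ℓ
      have reindex : ∀ (F : (Fin (n + 1) → Bool) → V),
          ∑ e : Fin (n + 1) → Bool, F e
            = ∑ e : Fin n → Bool, (F (Fin.cons true e) + F (Fin.cons false e)) := by
        intro F
        rw [← Equiv.sum_comp (Fin.consEquiv fun _ => Bool) F, Fintype.sum_prod_type,
          Fintype.sum_bool, ← Finset.sum_add_distrib]
        rfl
      rw [pow_succ', Module.End.mul_apply, ih, map_sum, reindex]
      refine Finset.sum_congr rfl fun e _ => ?_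
      rw [map_smul, hΔ]
      simp only [ones_cons, if_true, if_false, Nat.zero_add, ofFn_cons, List.cons_append]
      set o := ones e with ho
      have ct : ((-1 : RatFunc ℚ) ^ (1 + o) * A ^ ((n : ℤ) + 1 - 2 * (1 + (o : ℤ))))
          = -(A⁻¹ * ((-1 : RatFunc ℚ) ^ o * A ^ ((n : ℤ) - 2 * (o : ℤ)))) := by
        rw [show ((n : ℤ) + 1) - 2 * (1 + (o : ℤ)) = (-1) + ((n : ℤ) - 2 * o) by ring,
          zpow_add₀ hA, zpow_neg_one, pow_add]
        ring
      have cf : ((-1 : RatFunc ℚ) ^ o * A ^ (((n : ℕ) + 1 : ℤ) - 2 * ((o : ℕ) : ℤ)))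
          = A * ((-1 : RatFunc ℚ) ^ o * A ^ ((n : ℤ) - 2 * (o : ℤ))) := by
        rw [show ((n : ℤ) + 1) - 2 * (o : ℤ) = 1 + ((n : ℤ) - 2 * o) by ring,
          zpow_add₀ hA, zpow_one]
        ring
      push_cast
      rw [show k - ((n : ℤ) + 1) = k - n - 1 by ring,
        show a + (1 + (o : ℤ)) = a + o + 1 by ring]
      simp only [zero_add]
      rw [ct, cf, smul_sub, smul_smul, smul_smul, neg_smul,
        mul_comm ((-1 : RatFunc ℚ) ^ o * A ^ ((n : ℤ) - 2 * (o : ℤ))) A,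
        mul_comm ((-1 : RatFunc ℚ) ^ o * A ^ ((n : ℤ) - 2 * (o : ℤ))) A⁻¹]
      abel

open Finset in
/-- Abstract form of Lemma 3.8(i): `Δ₊^n (D k₀ a []) = Σ_e (-1)^{o(e)} A^{z(e)-o(e)} •
D (k₀-n) (a+o(e)) (ofFn e)`, where the recursion (b) encodes Lemma 3.6 (iii)-(iv). -/
theorem stmt_10 {V : Type*} [AddCommGroup V] [Module (RatFunc ℚ) V]
    (s : Module.End (RatFunc ℚ) V) (D : ℤ → ℤ → List Bool → V)
    (ha : ∀ (k a : ℤ) (ℓ : List Bool), s (D k a ℓ) = D k (a + 2) ℓ)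
    (hb : ∀ (k a : ℤ) (ℓ : List Bool),
      A • D k (a + 2) ℓ - A⁻¹ • D k a ℓ
        = A • D (k - 1) a (false :: ℓ) - A⁻¹ • D (k - 1) (a + 1) (true :: ℓ)) :
    ∀ n : ℕ, 1 ≤ n → ∀ k₀ a : ℤ,
      ((A • s - A⁻¹ • (1 : Module.End (RatFunc ℚ) V)) ^ n) (D k₀ a [])
        = ∑ e : Fin n → Bool,
            ((-1 : RatFunc ℚ) ^ ones e * A ^ ((n : ℤ) - 2 * (ones e : ℤ)))
              • D (k₀ - n) (a + ones e) (List.ofFn e) := by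
  intro n _ k₀ a
  simpa using aux_key_s10 s D ha hb n k₀ a []
end

section
/- Let K = RatFunc ℚ with A = RatFunc.X, let V be a K-vector space, and let P : ℤ → ℤ → V be a family satisfying, for every m ∈ ℤ: A • P m 0 + A⁻¹ • P 1 (m-1) = A⁻¹ • P (m-2) 0 + A • P 0 (m-2). Then for every m ∈ ℤ with m ≠ 0, the vector P m 0 lies in the ℤ[A, A⁻¹]-submodule of V generated by the set { P y x : y ∈ {0,1}, m·x ≥ 0, y + |x| ≤ |m| }. -/
/-- The subring `ℤ[A, A⁻¹]` of Laurent polynomials inside `ℚ(A)`. -/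
noncomputable def LaurentZA : Subalgebra ℤ (RatFunc ℚ) := Algebra.adjoin ℤ {A, A⁻¹}

/-- Abstract form of Lemma 1.4(i) ('popping arrows'): a strand with `m ≠ 0` arrows is a
`ℤ[A,A⁻¹]`-combination of diagrams `P y x` with `y ∈ {0,1}`, `m·x ≥ 0`, `y + |x| ≤ |m|`. -/
theorem stmt_12 {V : Type*} [AddCommGroup V] [Module (RatFunc ℚ) V]
    (P : ℤ → ℤ → V)
    (hrel : ∀ m : ℤ,
      A • P m 0 + A⁻¹ • P 1 (m - 1) = A⁻¹ • P (m - 2) 0 + A • P 0 (m - 2)) :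
    ∀ m : ℤ, m ≠ 0 →
      P m 0 ∈ Submodule.span LaurentZA
        {v : V | ∃ y x : ℤ, (y = 0 ∨ y = 1) ∧ m * x ≥ 0 ∧ y + |x| ≤ |m| ∧ v = P y x} := by
  have hA : A ≠ 0 := RatFunc.X_ne_zero
  have hAm : A ∈ LaurentZA := Algebra.subset_adjoin (Set.mem_insert _ _)
  have hAi : A⁻¹ ∈ LaurentZA := Algebra.subset_adjoin (Set.mem_insert_of_mem _ rfl)
  have hAA : A * A ∈ LaurentZA := mul_mem hAm hAm
  have hAiAi : A⁻¹ * A⁻¹ ∈ LaurentZA := mul_mem hAi hAi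
  set S : ℤ → Set V := fun m =>
    {v : V | ∃ y x : ℤ, (y = 0 ∨ y = 1) ∧ m * x ≥ 0 ∧ y + |x| ≤ |m| ∧ v = P y x} with hS
  have smulmem : ∀ (c : RatFunc ℚ), c ∈ LaurentZA → ∀ (v : V) (s : Set V),
      v ∈ Submodule.span LaurentZA s → c • v ∈ Submodule.span LaurentZA s := by
    intro c hc v s hv
    exact Submodule.smul_mem _ (⟨c, hc⟩ : LaurentZA) hv
  have key1 : ∀ m : ℤ,
      P m 0 = (A⁻¹ * A⁻¹) • P (m - 2) 0 + P 0 (m - 2) - (A⁻¹ * A⁻¹) • P 1 (m - 1) := by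
    intro m
    have h := congrArg (fun v => A⁻¹ • v) (hrel m)
    simp only [smul_add, smul_smul, inv_mul_cancel₀ hA, one_smul] at h
    exact eq_sub_of_add_eq h
  have key2 : ∀ m : ℤ,
      P m 0 = (A * A) • P (m + 2) 0 + P 1 (m + 1) - (A * A) • P 0 m := by
    intro m
    have h := congrArg (fun v => A • v) (hrel (m + 2))
    have e0 : m + 2 - 2 = m := by ring
    have e1 : m + 2 - 1 = m + 1 := by ring
    rw [e0, e1] at h
    simp only [smul_add, smul_smul, mul_inv_cancel₀ hA, one_smul] at h
    exact eq_sub_of_add_eq h.symm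
  have main : ∀ n : ℕ, ∀ m : ℤ, m ≠ 0 → m.natAbs ≤ n → P m 0 ∈ Submodule.span LaurentZA (S m) := by
    intro n
    induction n with
    | zero => intro m hm h0; omega
    | succ n IH =>
      intro m hm hle
      rcases lt_trichotomy m 0 with hneg | rfl | hpos
      · -- m ≤ -1 : use key2
        rw [key2 m]
        refine sub_mem (add_mem ?_ ?_) ?_
        · apply smulmem _ hAA
          rcases eq_or_lt_of_le (by omega : m ≤ -1) with h1 | h2
          · -- m = -1, so m + 2 = 1
            apply Submodule.subset_span
            refine ⟨1, 0, Or.inr rfl, by simp, ?_, by rw [h1]; norm_num⟩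
            simp only [Int.abs_eq_natAbs]; omega
          · rcases eq_or_lt_of_le (by omega : m ≤ -2) with h3 | h4
            · -- m = -2, so m + 2 = 0
              apply Submodule.subset_span
              refine ⟨0, 0, Or.inl rfl, by simp, ?_, by rw [h3]; norm_num⟩
              simp only [Int.abs_eq_natAbs]; omega
            · -- m ≤ -3
              have hmem := IH (m + 2) (by omega) (by omega)
              refine Submodule.span_mono ?_ hmem
              rintro v ⟨y, x, hy, hx, hyx, rfl⟩
              have hx0 : x ≤ 0 := by nlinarith
              refine ⟨y, x, hy, ?_, ?_, rfl⟩
              · nlinarith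
              · simp only [Int.abs_eq_natAbs] at hyx ⊢; omega
        · apply Submodule.subset_span
          refine ⟨1, m + 1, Or.inr rfl, by nlinarith, ?_, rfl⟩
          simp only [Int.abs_eq_natAbs]; omega
        · apply smulmem _ hAA
          apply Submodule.subset_span
          exact ⟨0, m, Or.inl rfl, mul_self_nonneg m, by simp, rfl⟩
      · exact absurd rfl hm
      · -- m ≥ 1
        rcases eq_or_lt_of_le (by omega : 1 ≤ m) with h1 | h2
        · -- m = 1
          apply Submodule.subset_span
          refine ⟨1, 0, Or.inr rfl, by simp, ?_, by rw [h1]⟩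
          simp only [Int.abs_eq_natAbs]; omega
        · -- m ≥ 2
          rw [key1 m]
          refine sub_mem (add_mem ?_ ?_) ?_
          · apply smulmem _ hAiAi
            rcases eq_or_lt_of_le (by omega : 2 ≤ m) with h3 | h4
            · apply Submodule.subset_span
              refine ⟨0, 0, Or.inl rfl, by simp, ?_, by rw [h3]; norm_num⟩
              simp only [Int.abs_eq_natAbs]; omega
            · -- m ≥ 3
              have hmem := IH (m - 2) (by omega) (by omega)
              refine Submodule.span_mono ?_ hmem
              rintro v ⟨y, x, hy, hx, hyx, rfl⟩
              have hx0 : 0 ≤ x := by nlinarith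
              refine ⟨y, x, hy, by nlinarith, ?_, rfl⟩
              simp only [Int.abs_eq_natAbs] at hyx ⊢; omega
          · apply Submodule.subset_span
            refine ⟨0, m - 2, Or.inl rfl, by nlinarith, ?_, rfl⟩
            simp only [Int.abs_eq_natAbs]; omega
          · apply smulmem _ hAiAi
            apply Submodule.subset_span
            refine ⟨1, m - 1, Or.inr rfl, by nlinarith, ?_, rfl⟩
            simp only [Int.abs_eq_natAbs]; omega
  intro m hm
  exact main m.natAbs m hm le_rfl
end

section
/- Let K = RatFunc ℚ with A = RatFunc.X, let V be a K-vector space, and let Q : ℤ → ℤ → V and M : ℤ → V be families satisfying: (H1) for all a, x ∈ ℤ, Q a (x+1) + A² • M (a+x+1) = A² • Q (a-1) x + M (a+x-1); and (H2) for all c ∈ ℤ, Q c 0 = (-A² - A⁻²) • M c and Q 0 c = (-A² - A⁻²) • M c. Then for all a, b ∈ ℤ with a·b > 0, the vector Q a b + A^(2·sign(a)) • M (a+b) lies in the ℤ[A, A⁻¹]-submodule of V generated by the set { M x : a·x ≥ 0, |x| < |a| + |b| } (here A^(2·sign(a)) equals A² if a > 0 and A⁻² if a < 0). -/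
/-!
Relation (H1) at `(a, b - 1)` reads `Q a b + A² M (a + b) = A² Q (a - 1) (b - 1) + M (a + b - 2)`,
so for `a, b > 0` it suffices that `Q a b` lies in the span of `M 0, …, M (a + b)` whenever
`a, b ≥ 0`; this follows from the same relation by induction, with (H2) as the base case.
The substitution `(a, b, x, A) ↦ (-a, -b, -x, A⁻¹)` preserves (H1) and (H2), and so turns the case
`a, b < 0` into the positive one.
-/

open Set Submodule

section Merging

variable {S K V : Type*} [CommRing S] [Ring K] [Algebra S K] [AddCommGroup V] [Module K V]
  (R : Subalgebra S K)

theorem Subalgebra.smul_mem_span {r : K} (hr : r ∈ R) {s : Set V} {v : V}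
    (hv : v ∈ span R s) : r • v ∈ span R s :=
  Submodule.smul_mem _ (⟨r, hr⟩ : R) hv

variable {R} {q δ : K} (Q : ℤ → ℤ → V) (M : ℤ → V)

theorem merge_relation_neg {q' : K} (hqq : q' * q = 1)
    (H1 : ∀ a x : ℤ, Q a (x + 1) + q • M (a + x + 1) = q • Q (a - 1) x + M (a + x - 1))
    (a x : ℤ) :
    Q (-a) (-(x + 1)) + q' • M (-(a + x + 1)) = q' • Q (-(a - 1)) (-x) + M (-(a + x - 1)) := by
  have h := congrArg (q' • ·) (H1 (1 - a) (-x - 1))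
  simp only [smul_add, smul_smul, hqq, one_smul] at h
  convert h.symm using 4 <;> ring

variable (hq : q ∈ R) (hδ : δ ∈ R)
  (H1 : ∀ a x : ℤ, Q a (x + 1) + q • M (a + x + 1) = q • Q (a - 1) x + M (a + x - 1))
  (H2 : ∀ c : ℤ, Q c 0 = δ • M c ∧ Q 0 c = δ • M c)
include hq hδ H1 H2

theorem pair_mem_span_of_nonneg {a b : ℤ} (ha : 0 ≤ a) (hb : 0 ≤ b) :
    Q a b ∈ span R (M '' Icc 0 (a + b)) := by
  induction b, hb using Int.leInduction generalizing a with
  | base =>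
    rw [(H2 a).1, add_zero]
    exact R.smul_mem_span hδ (subset_span ⟨a, ⟨ha, le_rfl⟩, rfl⟩)
  | succ b hb ih =>
    obtain rfl | ha := ha.eq_or_lt
    · rw [(H2 (b + 1)).2, zero_add]
      exact R.smul_mem_span hδ (subset_span ⟨b + 1, ⟨by omega, le_rfl⟩, rfl⟩)
    have hrec : Q a (b + 1) = q • Q (a - 1) b + M (a + b - 1) - q • M (a + b + 1) :=
      eq_sub_of_add_eq (H1 a b)
    have hQ : Q (a - 1) b ∈ span R (M '' Icc 0 (a + (b + 1))) :=
      span_mono (image_mono (Icc_subset_Icc_right (by omega))) (ih (by omega))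
    rw [hrec]
    exact sub_mem
      (add_mem (R.smul_mem_span hq hQ) (subset_span ⟨a + b - 1, ⟨by omega, by omega⟩, rfl⟩))
      (R.smul_mem_span hq (subset_span ⟨a + b + 1, ⟨by omega, by omega⟩, rfl⟩))

theorem merge_mem_span_of_pos {a b : ℤ} (ha : 0 < a) (hb : 0 < b) :
    Q a b + q • M (a + b) ∈ span R (M '' Icc 0 (a + b - 2)) := by
  have hstep : Q a b + q • M (a + b) = q • Q (a - 1) (b - 1) + M (a + b - 2) := by
    simpa only [sub_add_cancel, show a + (b - 1) + 1 = a + b by ring,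
      show a + (b - 1) - 1 = a + b - 2 by ring] using H1 a (b - 1)
  have hQ := pair_mem_span_of_nonneg Q M hq hδ H1 H2 (a := a - 1) (b := b - 1)
    (by omega) (by omega)
  rw [show a - 1 + (b - 1) = a + b - 2 by ring] at hQ
  rw [hstep]
  exact add_mem (R.smul_mem_span hq hQ) (subset_span ⟨_, ⟨by omega, le_rfl⟩, rfl⟩)

omit hq in
theorem merge_mem_span_of_neg {q' : K} (hq' : q' ∈ R) (hqq : q' * q = 1) {a b : ℤ} (ha : a < 0)
    (hb : b < 0) : Q a b + q' • M (a + b) ∈ span R (M '' Icc (a + b + 2) 0) := by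
  have h := merge_mem_span_of_pos (fun a b => Q (-a) (-b)) (fun x => M (-x)) hq' hδ
    (merge_relation_neg Q M hqq H1) (fun c => by simpa using H2 (-c)) (neg_pos.2 ha) (neg_pos.2 hb)
  simp only [neg_neg, ← neg_add] at h
  refine span_mono ?_ h
  rintro _ ⟨x, hx, rfl⟩
  exact ⟨-x, ⟨by linarith [hx.2], by linarith [hx.1]⟩, rfl⟩

end Merging

/-- Abstract form of Lemma 1.6(i) ('merging unknots'): for `a·b > 0`, the diagram
`Q a b + A^(2·sign a) • M (a+b)` is a `ℤ[A,A⁻¹]`-combination of single unknots `M x`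
with `a·x ≥ 0` and `|x| < |a| + |b|`. -/
theorem stmt_13 {V : Type*} [AddCommGroup V] [Module (RatFunc ℚ) V]
    (Q : ℤ → ℤ → V) (M : ℤ → V)
    (H1 : ∀ a x : ℤ,
      Q a (x + 1) + A ^ 2 • M (a + x + 1) = A ^ 2 • Q (a - 1) x + M (a + x - 1))
    (H2 : ∀ c : ℤ, Q c 0 = (-A ^ 2 - A⁻¹ ^ 2) • M c ∧ Q 0 c = (-A ^ 2 - A⁻¹ ^ 2) • M c) :
    ∀ a b : ℤ, a * b > 0 →
      Q a b + A ^ (2 * a.sign) • M (a + b) ∈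
        Submodule.span LaurentZA
          {v : V | ∃ x : ℤ, a * x ≥ 0 ∧ |x| < |a| + |b| ∧ v = M x} := by
  intro a b hab
  have hA : A ∈ LaurentZA := Algebra.subset_adjoin (by simp)
  have hA' : A⁻¹ ∈ LaurentZA := Algebra.subset_adjoin (by simp)
  have hδ : -A ^ 2 - A⁻¹ ^ 2 ∈ LaurentZA := sub_mem (neg_mem (pow_mem hA 2)) (pow_mem hA' 2)
  rcases mul_pos_iff.mp hab with ⟨ha, hb⟩ | ⟨ha, hb⟩
  · rw [Int.sign_eq_one_of_pos ha, mul_one, zpow_ofNat]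
    refine span_mono ?_ (merge_mem_span_of_pos Q M (pow_mem hA 2) hδ H1 H2 ha hb)
    rintro _ ⟨x, hx, rfl⟩
    rw [abs_of_pos ha, abs_of_pos hb]
    exact ⟨x, mul_nonneg ha.le hx.1, by rw [abs_of_nonneg hx.1]; linarith [hx.2], rfl⟩
  · have hA0 : A ≠ 0 := RatFunc.X_ne_zero
    have hAA : A⁻¹ ^ 2 * A ^ 2 = 1 := by
      rw [← mul_pow, inv_mul_cancel₀ hA0, one_pow]
    rw [Int.sign_eq_neg_one_of_neg ha, show (2 : ℤ) * -1 = -2 by norm_num, zpow_neg, zpow_ofNat,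
      ← inv_pow]
    refine span_mono ?_ (merge_mem_span_of_neg Q M hδ H1 H2 (pow_mem hA' 2) hAA ha hb)
    rintro _ ⟨x, hx, rfl⟩
    rw [abs_of_neg ha, abs_of_neg hb]
    exact ⟨x, mul_nonneg_of_nonpos_of_nonpos ha.le hx.2,
      by rw [abs_of_nonpos hx.2]; linarith [hx.1], rfl⟩
end
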